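/- Let M be an NFA with L(M) ⊆ Enc and define, for p, q ∈ Q, rep_M(p, q) = pick_threshold_K(0, p, q) ∪ pick_separate_V(|Q|+1, |Q|, p, q), where pick_threshold is taken for the threshold-token sets K_M[p, q] and pick_separate for the vertex-token sets V_M[p, q]. Then L(M) contains a word encoding a positive Independent Set instance if and only if decode(L(M̂_{rep_M})) contains a positive Independent Set instance. -/

import Mathlib

/-- The fixed five-letter alphabet Σ = {▷, 1, a, #, $}. -/
inductive Letter : Type
  | tri    -- ▷
  | one    -- 1
  | lett   -- a
  | hash   -- #
  | dollar -- $
deriving DecidableEq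

/-- Words over the alphabet Σ. -/
abbrev Word := List Letter

/-- A nondeterministic finite automaton over the fixed alphabet `Letter`,
with state type `Q` (assumed finite via a `Fintype` instance where needed),
transition function `δ`, initial state `q0` and final states `F`. -/
structure NFA' (Q : Type) where
  δ : Q → Letter → Set Q
  q0 : Q
  F : Set Q

namespace NFA'

variable {Q : Type}

/-- One step of the transition function on a set of states. -/
def stepSet (M : NFA' Q) (S : Set Q) (x : Letter) : Set Q := ⋃ q ∈ S, M.δ q x

/-- The extension of the transition function to words (acting on sets of states). -/
def evalFrom (M : NFA' Q) (S : Set Q) (w : Word) : Set Q := w.foldl M.stepSet S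

/-- The language accepted by `M`. -/
def lang (M : NFA' Q) : Set Word := { w | ∃ q ∈ M.F, q ∈ M.evalFrom {M.q0} w }

/-- The automaton `M[p, q]`: same transitions, initial state `p`, unique final state `q`. -/
def between (M : NFA' Q) (p q : Q) : NFA' Q := ⟨M.δ, p, {q}⟩

/-- Every state is reachable from the initial state. -/
def Reachable (M : NFA' Q) : Prop := ∀ q : Q, ∃ w : Word, q ∈ M.evalFrom {M.q0} w

/-- From every state some final state can be reached. -/
def CoReachable (M : NFA' Q) : Prop :=
  ∀ q : Q, ∃ w : Word, ∃ f ∈ M.F, f ∈ M.evalFrom {q} w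

end NFA'

/-- `rep` is a representative function for `M`: each `rep p q` is a finite subset
of `L(M[p, q])`. -/
def IsRepFun {Q : Type} (M : NFA' Q) (rep : Q → Q → Set Word) : Prop :=
  ∀ p q : Q, (rep p q).Finite ∧ rep p q ⊆ (M.between p q).lang

/-- The language `L(M̂_rep)`: all words obtained by concatenating representatives
along a path from the initial state to a final state. -/
def hatLang {Q : Type} (M : NFA' Q) (rep : Q → Q → Set Word) : Set Word :=
  { w | ∃ (m : ℕ) (u : Fin m → Word) (qs : Fin (m + 1) → Q),
      qs 0 = M.q0 ∧ qs (Fin.last m) ∈ M.F ∧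
      (∀ i : Fin m, u i ∈ rep (qs i.castSucc) (qs i.succ)) ∧
      w = (List.ofFn u).flatten }

/-- The threshold token `▷1^k$`. -/
def thresholdTok (k : ℕ) : Word := Letter.tri :: (List.replicate k Letter.one ++ [Letter.dollar])

/-- The left vertex token `▷a^p#`. -/
def leftTok (p : ℕ) : Word := Letter.tri :: (List.replicate p Letter.lett ++ [Letter.hash])

/-- The right vertex token `▷a^q$`. -/
def rightTok (q : ℕ) : Word := Letter.tri :: (List.replicate q Letter.lett ++ [Letter.dollar])

/-- The encoding `▷1^k$ ∏_i (▷a^{p_i}# ▷a^{q_i}$)` of a threshold `k` together with a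
list of (encoded) edges. -/
def encode (k : ℕ) (es : List (ℕ × ℕ)) : Word :=
  thresholdTok k ++ (es.map (fun e => leftTok e.1 ++ rightTok e.2)).flatten

/-- The regular language `Enc = ▷1*$(▷a*#▷a*$)*` of all encodings. -/
def Enc : Set Word := { w | ∃ (k : ℕ) (es : List (ℕ × ℕ)), w = encode k es }

/-- A token: a threshold token, a left vertex token, or a right vertex token. -/
def IsToken (w : Word) : Prop :=
  (∃ k, w = thresholdTok k) ∨ (∃ p, w = leftTok p) ∨ (∃ q, w = rightTok q)

/-- A representative function is token-preserving if all representatives are tokens. -/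
def TokenPreserving {Q : Type} (rep : Q → Q → Set Word) : Prop :=
  ∀ p q : Q, ∀ w ∈ rep p q, IsToken w

/-- A finite simple undirected graph with vertices named by natural numbers:
a finite vertex set and a finite set of undirected edges. -/
structure FinGraph where
  V : Finset ℕ
  E : Finset (Sym2 ℕ)

/-- `G` has a vertex cover of size at most `k`. -/
def HasVC (G : FinGraph) (k : ℕ) : Prop :=
  ∃ S : Finset ℕ, S ⊆ G.V ∧ S.card ≤ k ∧ ∀ e ∈ G.E, ∃ a ∈ S, a ∈ e

/-- `G` has an independent set of size at least `k`. -/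
def HasIS (G : FinGraph) (k : ℕ) : Prop :=
  ∃ S : Finset ℕ, S ⊆ G.V ∧ k ≤ S.card ∧ ∀ a ∈ S, ∀ b ∈ S, s(a, b) ∉ G.E

/-- The graph described by a list of (encoded) edges: vertices are all the numbers
occurring, edges are the non-loop pairs. -/
def graphOf (es : List (ℕ × ℕ)) : FinGraph where
  V := (es.map Prod.fst).toFinset ∪ (es.map Prod.snd).toFinset
  E := ((es.filter (fun e => e.1 ≠ e.2)).map (fun e => s(e.1, e.2))).toFinset

/-- `decode(w) = (G, k)` : the word `w ∈ Enc` encodes the graph `G` and threshold `k`. -/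
def decodesTo (w : Word) (G : FinGraph) (k : ℕ) : Prop :=
  ∃ es : List (ℕ × ℕ), w = encode k es ∧ G = graphOf es

/-- The set of all threshold tokens (the language `▷1*$`). -/
def ThreshTokens : Set Word := { w | ∃ k, w = thresholdTok k }

/-- The set of all vertex tokens (the language `▷a*(#|$)`). -/
def VertTokens : Set Word := { w | (∃ p, w = leftTok p) ∨ (∃ q, w = rightTok q) }

/-- The threshold-token sets `K_M[p, q] = L(M[p, q]) ∩ L(▷1*$)`. -/
def KM {Q : Type} (M : NFA' Q) (p q : Q) : Set Word := (M.between p q).lang ∩ ThreshTokens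

/-- The vertex-token sets `V_M[p, q] = L(M[p, q]) ∩ L(▷a*(#|$))`. -/
def VM {Q : Type} (M : NFA' Q) (p q : Q) : Set Word := (M.between p q).lang ∩ VertTokens

/-- `u, qs` form a characteristic factorization (of `u₀u₁⋯u_m`) with respect to the
states `qs 0 = q₀, qs 1, …`: the first factor is a threshold token from `K_M[q₀, q₁]`,
all later factors are vertex tokens from the corresponding `V_M`-sets, and the last
state is final. -/
def CharFact {Q : Type} (M : NFA' Q) {m : ℕ} (u : Fin (m + 1) → Word)
    (qs : Fin (m + 2) → Q) : Prop :=
  qs 0 = M.q0 ∧ qs (Fin.last (m + 1)) ∈ M.F ∧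
  u 0 ∈ KM M (qs 0) (qs 1) ∧
  ∀ i : Fin (m + 1), 0 < i.val → u i ∈ VM M (qs i.castSucc) (qs i.succ)

/-- A fixed numbering of the alphabet, inducing a linear order on `Letter`. -/
def letterIdx : Letter → ℕ
  | Letter.tri => 0
  | Letter.one => 1
  | Letter.lett => 2
  | Letter.hash => 3
  | Letter.dollar => 4

/-- Strict shortlex order on words: first by length, then lexicographically. -/
def slLT (u v : Word) : Prop :=
  u.length < v.length ∨
    (u.length = v.length ∧ List.Lex (fun a b => letterIdx a < letterIdx b) u v)

/-- Non-strict shortlex order. -/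
def slLE (u v : Word) : Prop := slLT u v ∨ u = v

/-- `w` is the shortlex-smallest element of `S`. -/
def IsSlLeast (S : Set Word) (w : Word) : Prop := w ∈ S ∧ ∀ v ∈ S, slLE w v

/-- The quotient `L/1` of a language: remove the last letter from every word. -/
def langDiv1 (L : Set Word) : Set Word := { w | ∃ σ : Letter, w ++ [σ] ∈ L }

/-- `pick_threshold_T(k, p, q)`: all of `T p q` if it is finite, otherwise the
shortlex-smallest element of `T p q` of length at least `k`. -/
def pickThreshold {Q : Type} (T : Q → Q → Set Word) (k : ℕ) (p q : Q) : Set Word :=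
  { w | ((T p q).Finite ∧ w ∈ T p q) ∨
        (¬ (T p q).Finite ∧ IsSlLeast { v | v ∈ T p q ∧ k ≤ v.length } w) }

/-- The auxiliary function `pick_merge^G_T(p, q)`: for every `A ⊆ Q²` containing
`(p, q)` whose intersection `⋂_{(p',q') ∈ A} T[p',q']/1` is nonempty, it contains the
shortlex-smallest element of that intersection. -/
def pickMergeG {Q : Type} (T : Q → Q → Set Word) (p q : Q) : Set Word :=
  { w | ∃ A : Set (Q × Q), (p, q) ∈ A ∧
        IsSlLeast (⋂ r ∈ A, langDiv1 (T r.1 r.2)) w }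

/-- `pick_merge_T(p, q) = T[p, q] ∩ (pick_merge^G_T(p, q)·Σ)`. -/
def pickMerge {Q : Type} (T : Q → Q → Set Word) (p q : Q) : Set Word :=
  { x | x ∈ T p q ∧ ∃ w ∈ pickMergeG T p q, ∃ σ : Letter, x = w ++ [σ] }

/-- `ps` is a family `pick_separate_T(s, t, ·, ·)`: for some linear order (injection
into ℕ) on the pairs of states, processed in this order, the value at a pair with
finite `T`-set is that whole set, and at a pair with infinite `T`-set it consists of
exactly the `s` shortlex-first elements `w` of `T p q` of length at least `t` whose
`w/1` avoids `v/1` for all `v` in the sets chosen at previously processed pairs. -/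
def IsPickSeparate {Q : Type} (T : Q → Q → Set Word) (s t : ℕ)
    (ps : Q → Q → Set Word) : Prop :=
  ∃ ord : Q × Q → ℕ, Function.Injective ord ∧
    ∀ p q : Q,
      ((T p q).Finite → ps p q = T p q) ∧
      (¬ (T p q).Finite →
        (∀ w ∈ ps p q, w ∈ T p q ∧ t ≤ w.length ∧
          ∀ p' q' : Q, ord (p', q') < ord (p, q) →
            ∀ v ∈ ps p' q', v.dropLast ≠ w.dropLast) ∧
        (ps p q).ncard = s ∧
        (∀ w : Word,
          (w ∈ T p q ∧ t ≤ w.length ∧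
            ∀ p' q' : Q, ord (p', q') < ord (p, q) →
              ∀ v ∈ ps p' q', v.dropLast ≠ w.dropLast) →
          w ∉ ps p q → ∀ v ∈ ps p q, slLE v w))

/-!
A word of `Enc` in `L(M)` is read along an accepting run, each token between a pair of states
`P = (p, q)`. The threshold token is replaced by the shortlex-least one of `K_M[q₀, q₁]`, shorter
than `|Q|` by pumping, so an independent set of that smaller size survives. Vertex tokens at a pair
with finite `V_M[P]` are kept; by pumping their names are below `|Q|`. At a pair with infinite
`V_M[P]` the `|Q| + 1` picked tokens have distinct names, at most two of them below `|Q|`, and the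
name sets of different pairs are disjoint because `pick_separate` separates their `w/1`. Since `M`
accepts only words of `Enc`, all vertex tokens read at one pair end in the same marker, so a picked
token can stand in for any of them. The vertices of the independent set read at `P` are sent
injectively to large picked names and all other vertices at `P` to one spare picked token; the
renamed set stays independent. The converse holds because `L(M̂_rep) ⊆ L(M)`.
-/

def tok (x y : Letter) (n : ℕ) : Word := Letter.tri :: (List.replicate n x ++ [y])

lemma tok_eq_append (x y : Letter) (n : ℕ) :
    tok x y n = [Letter.tri] ++ (List.replicate n x ++ [y]) := rfl

lemma tok_length (x y : Letter) (n : ℕ) : (tok x y n).length = n + 2 := by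
  simp [tok]

lemma tok_dropLast (x y : Letter) (n : ℕ) :
    (tok x y n).dropLast = Letter.tri :: List.replicate n x := by
  rw [tok, ← List.cons_append, List.dropLast_concat]

def tokName (w : Word) : ℕ := w.length - 2

@[simp]
lemma tokName_tok (x y : Letter) (n : ℕ) : tokName (tok x y n) = n := by
  simp [tokName, tok_length]

lemma thresholdTok_eq_tok : thresholdTok = tok Letter.one Letter.dollar := rfl

lemma leftTok_eq_tok : leftTok = tok Letter.lett Letter.hash := rfl

lemma rightTok_eq_tok : rightTok = tok Letter.lett Letter.dollar := rfl

def isMarker : Letter → Bool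
  | Letter.hash | Letter.dollar => true
  | _ => false

lemma mem_vertTokens_iff {w : Word} :
    w ∈ VertTokens ↔ ∃ y, isMarker y ∧ ∃ n, w = tok Letter.lett y n := by
  constructor
  · rintro (⟨n, rfl⟩ | ⟨n, rfl⟩)
    exacts [⟨_, rfl, n, rfl⟩, ⟨_, rfl, n, rfl⟩]
  · rintro ⟨y, hy, n, rfl⟩
    cases y <;> simp [isMarker] at hy
    exacts [Or.inl ⟨n, rfl⟩, Or.inr ⟨n, rfl⟩]

def markers (w : Word) : Word := w.filter isMarker

lemma markers_append (u v : Word) : markers (u ++ v) = markers u ++ markers v :=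
  List.filter_append ..

lemma markers_tok {x y : Letter} (hx : isMarker x = false) (hy : isMarker y) (n : ℕ) :
    markers (tok x y n) = [y] := by
  rw [markers, tok, List.filter_cons_of_neg (by decide), List.filter_append,
    List.filter_replicate, hx, List.filter_singleton, hy]
  rfl

def edgeWord (es : List (ℕ × ℕ)) : Word := (es.map fun e => leftTok e.1 ++ rightTok e.2).flatten

lemma edgeWord_cons (e : ℕ × ℕ) (es : List (ℕ × ℕ)) :
    edgeWord (e :: es) = leftTok e.1 ++ (rightTok e.2 ++ edgeWord es) := by
  simp [edgeWord]

lemma markers_edgeWord (es : List (ℕ × ℕ)) :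
    markers (edgeWord es) = (List.replicate es.length [Letter.hash, Letter.dollar]).flatten := by
  induction es with
  | nil => rfl
  | cons e es ih =>
    rw [edgeWord_cons, markers_append, markers_append, ih, leftTok_eq_tok, rightTok_eq_tok,
      markers_tok (x := Letter.lett) (y := Letter.hash) rfl rfl,
      markers_tok (x := Letter.lett) (y := Letter.dollar) rfl rfl]
    simp [List.replicate_succ]

lemma markers_encode (k : ℕ) (es : List (ℕ × ℕ)) :
    markers (encode k es) =
      Letter.dollar :: (List.replicate es.length [Letter.hash, Letter.dollar]).flatten := by
  rw [encode, ← edgeWord, markers_append, thresholdTok_eq_tok,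
    markers_tok (x := Letter.one) rfl rfl, markers_edgeWord]
  rfl

lemma marker_eq_of_mem_enc {x z : Word} {y y' : Letter} {a b : ℕ} (hy : isMarker y)
    (hy' : isMarker y') (h : x ++ (tok Letter.lett y a ++ z) ∈ Enc)
    (h' : x ++ (tok Letter.lett y' b ++ z) ∈ Enc) : y = y' := by
  obtain ⟨k, es, he⟩ := h
  obtain ⟨k', es', he'⟩ := h'
  have hm := congrArg markers he
  have hm' := congrArg markers he'
  rw [markers_append, markers_append, markers_tok rfl hy, markers_encode] at hm
  rw [markers_append, markers_append, markers_tok rfl hy', markers_encode] at hm'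
  have hlen : es.length = es'.length := by
    have h₁ := congrArg List.length hm
    have h₂ := congrArg List.length hm'
    simp only [List.length_append, List.length_cons, List.length_flatten, List.map_replicate,
      List.sum_replicate, smul_eq_mul, List.length_nil] at h₁ h₂
    omega
  rw [hlen, ← hm'] at hm
  simpa using hm

namespace NFA'

variable {Q : Type} (M : NFA' Q)

/-- `NFA'` is Mathlib's `NFA` with a single start state; `evalFrom` agrees definitionally. -/
def toNFA : NFA Letter Q := ⟨M.δ, {M.q0}, M.F⟩

variable {M}

lemma mem_between_lang_iff {p q : Q} {w : Word} :
    w ∈ (M.between p q).lang ↔ q ∈ M.toNFA.evalFrom {p} w := by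
  simp only [lang, between, Set.mem_singleton_iff, exists_eq_left]
  rfl

lemma mem_lang_iff {w : Word} : w ∈ M.lang ↔ ∃ f ∈ M.F, w ∈ (M.between M.q0 f).lang := by
  simp only [mem_between_lang_iff]
  rfl

lemma append_mem_between_iff {p q : Q} {u v : Word} :
    u ++ v ∈ (M.between p q).lang ↔
      ∃ r, u ∈ (M.between p r).lang ∧ v ∈ (M.between r q).lang := by
  simp only [mem_between_lang_iff, NFA.evalFrom_append]
  exact NFA.mem_evalFrom_iff_exists

lemma exists_context (hre : M.Reachable) (hco : M.CoReachable) (p q : Q) :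
    ∃ x y : Word, ∀ v ∈ (M.between p q).lang, x ++ (v ++ y) ∈ M.lang := by
  obtain ⟨x, hx⟩ := hre p
  obtain ⟨y, f, hf, hy⟩ := hco q
  refine ⟨x, y, fun v hv => mem_lang_iff.2 ⟨f, hf, ?_⟩⟩
  exact append_mem_between_iff.2 ⟨p, mem_between_lang_iff.2 hx,
    append_mem_between_iff.2 ⟨q, hv, mem_between_lang_iff.2 hy⟩⟩

end NFA'

/-- `w ∈ L(M̂_rep[p, q])`. -/
inductive RepPath {Q : Type} (rep : Q → Q → Set Word) : Q → Q → Word → Prop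
  | nil (p : Q) : RepPath rep p p []
  | cons {p r q : Q} {u w : Word} : u ∈ rep p r → RepPath rep r q w → RepPath rep p q (u ++ w)

namespace RepPath

variable {Q : Type} {rep rep' : Q → Q → Set Word} {p q : Q} {w : Word}

lemma mono (h : RepPath rep p q w) (hrep : ∀ p q, rep p q ⊆ rep' p q) : RepPath rep' p q w := by
  induction h with
  | nil p => exact nil p
  | cons hu _ ih => exact cons (hrep _ _ hu) ih

lemma mem_between {M : NFA' Q} (h : RepPath (fun p q => (M.between p q).lang) p q w) :
    w ∈ (M.between p q).lang := by
  induction h with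
  | nil p => exact NFA'.mem_between_lang_iff.2 rfl
  | cons hu _ ih => exact NFA'.append_mem_between_iff.2 ⟨_, hu, ih⟩

lemma of_ofFn {m : ℕ} (u : Fin m → Word) (qs : Fin (m + 1) → Q)
    (h : ∀ i : Fin m, u i ∈ rep (qs i.castSucc) (qs i.succ)) :
    RepPath rep (qs 0) (qs (Fin.last m)) (List.ofFn u).flatten := by
  induction m with
  | zero => exact nil _
  | succ m ih =>
    rw [List.ofFn_succ, List.flatten_cons]
    exact cons (h 0) (ih (fun i => u i.succ) (fun i => qs i.succ) fun i => h i.succ)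

lemma exists_ofFn (h : RepPath rep p q w) :
    ∃ (m : ℕ) (u : Fin m → Word) (qs : Fin (m + 1) → Q), qs 0 = p ∧ qs (Fin.last m) = q ∧
      (∀ i : Fin m, u i ∈ rep (qs i.castSucc) (qs i.succ)) ∧ w = (List.ofFn u).flatten := by
  induction h with
  | nil p => exact ⟨0, Fin.elim0, fun _ => p, rfl, rfl, fun i => i.elim0, rfl⟩
  | @cons p r q u w hu _ ih =>
    obtain ⟨m, us, qs, h0, hlast, hus, rfl⟩ := ih
    refine ⟨m + 1, Fin.cons u us, Fin.cons p qs, rfl, by simpa using hlast, ?_, by simp⟩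
    intro i
    cases i using Fin.cases with
    | zero => simpa [h0] using hu
    | succ i => simpa using hus i

end RepPath

lemma mem_hatLang_iff {Q : Type} {M : NFA' Q} {rep : Q → Q → Set Word} {w : Word} :
    w ∈ hatLang M rep ↔ ∃ f ∈ M.F, RepPath rep M.q0 f w := by
  constructor
  · rintro ⟨m, u, qs, h0, hF, hu, rfl⟩
    exact ⟨_, hF, h0 ▸ RepPath.of_ofFn u qs hu⟩
  · rintro ⟨f, hf, h⟩
    obtain ⟨m, u, qs, h0, hlast, hu, rfl⟩ := h.exists_ofFn
    exact ⟨m, u, qs, h0, hlast ▸ hf, hu, rfl⟩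

lemma hatLang_subset_lang {Q : Type} {M : NFA' Q} {rep : Q → Q → Set Word}
    (hrep : ∀ p q, rep p q ⊆ (M.between p q).lang) : hatLang M rep ⊆ M.lang := fun w hw => by
  obtain ⟨f, hf, h⟩ := mem_hatLang_iff.1 hw
  exact NFA'.mem_lang_iff.2 ⟨f, hf, (h.mono hrep).mem_between⟩

namespace NFA

variable {α σ : Type*} {M : NFA α σ} {a : α} {s t u : σ}

lemma mem_evalFrom_replicate_add {i j : ℕ} (hs : t ∈ M.evalFrom {s} (List.replicate i a))
    (ht : u ∈ M.evalFrom {t} (List.replicate j a)) :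
    u ∈ M.evalFrom {s} (List.replicate (i + j) a) := by
  rw [List.replicate_add, evalFrom_append, mem_evalFrom_iff_exists]
  exact ⟨t, hs, ht⟩

lemma mem_evalFrom_replicate_mul {c : ℕ} (h : s ∈ M.evalFrom {s} (List.replicate c a)) (k : ℕ) :
    s ∈ M.evalFrom {s} (List.replicate (k * c) a) := by
  induction k with
  | zero => simp
  | succ k ih => simpa [add_mul] using mem_evalFrom_replicate_add ih h

lemma exists_run_replicate {n : ℕ} (h : t ∈ M.evalFrom {s} (List.replicate n a)) :
    ∃ f : ℕ → σ, f 0 = s ∧ f n = t ∧ ∀ i < n, f (i + 1) ∈ M.step (f i) a := by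
  induction n generalizing t with
  | zero => exact ⟨fun _ => s, rfl, by simpa [eq_comm] using h, by simp⟩
  | succ n ih =>
    rw [List.replicate_succ', evalFrom_append, evalFrom_singleton, mem_stepSet] at h
    obtain ⟨t', ht', ht⟩ := h
    obtain ⟨f, h0, hn, hf⟩ := ih ht'
    refine ⟨Function.update f (n + 1) t, by simp [h0], by simp, fun i hi => ?_⟩
    rcases Nat.lt_succ_iff_lt_or_eq.1 hi with hi | rfl
    · simpa [Function.update_of_ne (by omega : i + 1 ≠ n + 1),
        Function.update_of_ne (by omega : i ≠ n + 1)] using hf i hi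
    · simpa [Function.update_of_ne (by omega : i ≠ i + 1), hn] using ht

lemma mem_evalFrom_replicate_of_run {f : ℕ → σ} {n : ℕ}
    (hf : ∀ i < n, f (i + 1) ∈ M.step (f i) a) {i j : ℕ} (hij : i + j ≤ n) :
    f (i + j) ∈ M.evalFrom {f i} (List.replicate j a) := by
  induction j with
  | zero => simp
  | succ j ih =>
    rw [List.replicate_succ', evalFrom_append, evalFrom_singleton, mem_stepSet]
    exact ⟨f (i + j), ih (by omega), hf (i + j) (by omega)⟩

lemma exists_pump_replicate [Fintype σ] {n : ℕ} (h : t ∈ M.evalFrom {s} (List.replicate n a))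
    (hn : Fintype.card σ ≤ n) :
    ∃ i c j, 0 < c ∧ i + c + j = n ∧
      ∀ k, t ∈ M.evalFrom {s} (List.replicate (i + k * c + j) a) := by
  obtain ⟨f, h0, hn', hf⟩ := exists_run_replicate h
  obtain ⟨i, j, hij, hjn, hfij⟩ : ∃ i j, i < j ∧ j ≤ n ∧ f i = f j := by
    obtain ⟨x, y, hxy, hfxy⟩ := Fintype.exists_ne_map_eq_of_card_lt (fun i : Fin (n + 1) => f i)
      (by simpa using Nat.lt_succ_of_le hn)
    rcases lt_or_gt_of_ne (Fin.val_injective.ne hxy) with hlt | hlt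
    exacts [⟨x, y, hlt, by omega, hfxy⟩, ⟨y, x, hlt, by omega, hfxy.symm⟩]
  refine ⟨i, j - i, n - j, by omega, by omega, fun k => ?_⟩
  have hloop : f i ∈ M.evalFrom {f i} (List.replicate (j - i) a) := by
    simpa [hfij, Nat.add_sub_cancel' hij.le] using mem_evalFrom_replicate_of_run hf
      (i := i) (j := j - i) (by omega)
  have hpre : f i ∈ M.evalFrom {s} (List.replicate i a) := by
    simpa [h0] using mem_evalFrom_replicate_of_run hf (i := 0) (j := i) (by omega)
  have hsuf : t ∈ M.evalFrom {f i} (List.replicate (n - j) a) := by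
    simpa [hfij, Nat.add_sub_cancel' hjn, hn'] using mem_evalFrom_replicate_of_run hf
      (i := j) (j := n - j) (by omega)
  exact mem_evalFrom_replicate_add
    (mem_evalFrom_replicate_add hpre (mem_evalFrom_replicate_mul hloop k)) hsuf

end NFA

section Pumping

variable {Q : Type} [Fintype Q] {M : NFA' Q} {x y : Letter} {p q : Q}

lemma exists_pump_tok {r : ℕ} (h : tok x y r ∈ (M.between p q).lang) (hr : Fintype.card Q ≤ r) :
    ∃ i c j, 0 < c ∧ i + c + j = r ∧ ∀ k, tok x y (i + k * c + j) ∈ (M.between p q).lang := by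
  simp only [tok_eq_append, NFA'.append_mem_between_iff] at h ⊢
  obtain ⟨p₁, hp₁, p₂, hp₂, hq⟩ := h
  obtain ⟨i, c, j, hc, hr', hpump⟩ :=
    NFA.exists_pump_replicate (NFA'.mem_between_lang_iff.1 hp₂) hr
  exact ⟨i, c, j, hc, hr', fun k => ⟨p₁, hp₁, p₂, NFA'.mem_between_lang_iff.2 (hpump k), hq⟩⟩

lemma exists_short_tok {r : ℕ} (h : tok x y r ∈ (M.between p q).lang) :
    ∃ r' ≤ r, r' < Fintype.card Q ∧ tok x y r' ∈ (M.between p q).lang := by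
  induction r using Nat.strong_induction_on with
  | _ r ih =>
    by_cases hr : r < Fintype.card Q
    · exact ⟨r, le_rfl, hr, h⟩
    · obtain ⟨i, c, j, hc, rfl, hpump⟩ := exists_pump_tok h (not_lt.1 hr)
      obtain ⟨r', hr', hshort⟩ := ih (i + j) (by omega) (by simpa using hpump 0)
      exact ⟨r', by omega, hshort⟩

lemma lt_card_of_finite_tok {r : ℕ} (hfin : {n | tok x y n ∈ (M.between p q).lang}.Finite)
    (h : tok x y r ∈ (M.between p q).lang) : r < Fintype.card Q := by
  by_contra hr
  obtain ⟨i, c, j, hc, -, hpump⟩ := exists_pump_tok h (not_lt.1 hr)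
  obtain ⟨B, hB⟩ := hfin.bddAbove
  have := hB (hpump (B + 1))
  nlinarith

end Pumping

lemma letterIdx_injective : Function.Injective letterIdx := by
  intro a b h
  cases a <;> cases b <;> first | rfl | simp [letterIdx] at h

lemma exists_isSlLeast {S : Set Word} (hS : S.Nonempty) : ∃ w, IsSlLeast S w := by
  let r : Letter → Letter → Prop := fun a b => letterIdx a < letterIdx b
  have : Std.Trichotomous r := ⟨fun a b hab hba => letterIdx_injective (by omega)⟩
  have hwf : WellFounded (List.Shortlex r) :=
    List.Shortlex.wf (InvImage.wf letterIdx wellFounded_lt)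
  refine ⟨hwf.min S hS, hwf.min_mem S hS, fun v hv => ?_⟩
  have hmin := hwf.not_lt_min S hv
  simp only [slLE, slLT, List.shortlex_def] at hmin ⊢
  rcases lt_trichotomy (hwf.min S hS).length v.length with hlt | heq | hgt
  · exact Or.inl (Or.inl hlt)
  · rcases trichotomous_of (List.Lex r) (hwf.min S hS) v with h | h | h
    · exact Or.inl (Or.inr ⟨heq, h⟩)
    · exact Or.inr h
    · exact absurd (Or.inr ⟨heq.symm, h⟩) hmin
  · exact absurd (Or.inl hgt) hmin

lemma IsSlLeast.length_le {S : Set Word} {w v : Word} (hw : IsSlLeast S w) (hv : v ∈ S) :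
    w.length ≤ v.length := by
  rcases hw.2 v hv with (h | ⟨h, -⟩) | rfl <;> omega

lemma exists_tok_mem_pickThreshold {Q : Type} [Fintype Q] {M : NFA' Q} {p q : Q} {k : ℕ}
    (hk : thresholdTok k ∈ KM M p q) :
    ∃ k₀ ≤ k, k₀ < Fintype.card Q ∧ thresholdTok k₀ ∈ pickThreshold (KM M) 0 p q := by
  obtain ⟨w₀, hw₀⟩ := exists_isSlLeast ⟨_, hk⟩
  obtain ⟨k₀, rfl⟩ := hw₀.1.2
  obtain ⟨k', -, hk', hshort⟩ := exists_short_tok (thresholdTok_eq_tok ▸ hk.1)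
  have hlen (j : ℕ) (hj : thresholdTok j ∈ KM M p q) : k₀ ≤ j := by
    simpa [thresholdTok_eq_tok, tok_length] using hw₀.length_le hj
  refine ⟨k₀, hlen k hk, (hlen k' ⟨hshort, k', rfl⟩).trans_lt hk', ?_⟩
  by_cases hfin : (KM M p q).Finite
  · exact Or.inl ⟨hfin, hw₀.1⟩
  · exact Or.inr ⟨hfin, by simpa using hw₀⟩

lemma mem_graphOf_V {es : List (ℕ × ℕ)} {v : ℕ} :
    v ∈ (graphOf es).V ↔ ∃ e ∈ es, e.1 = v ∨ e.2 = v := by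
  simp only [graphOf, Finset.mem_union, List.mem_toFinset, List.mem_map]
  aesop

lemma mem_graphOf_E {es : List (ℕ × ℕ)} {z : Sym2 ℕ} :
    z ∈ (graphOf es).E ↔ ∃ e ∈ es, e.1 ≠ e.2 ∧ s(e.1, e.2) = z := by
  simp [graphOf, and_assoc]

def Tracks (S : Finset ℕ) (φ : ℕ → ℕ) (a a' : ℕ) : Prop := a' ∈ S.image φ → a ∈ S ∧ a' = φ a

lemma hasIS_of_tracks {es es' : List (ℕ × ℕ)} {S : Finset ℕ} {φ : ℕ → ℕ}
    (hS : ∀ a ∈ S, ∀ b ∈ S, s(a, b) ∉ (graphOf es).E) (hφ : Set.InjOn φ S)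
    (hV : ∀ v ∈ S, φ v ∈ (graphOf es').V)
    (htrack : ∀ e' ∈ es', ∃ e ∈ es, Tracks S φ e.1 e'.1 ∧ Tracks S φ e.2 e'.2) :
    HasIS (graphOf es') S.card := by
  refine ⟨S.image φ, ?_, (Finset.card_image_of_injOn hφ).ge, fun a ha b hb hab => ?_⟩
  · simpa [Finset.subset_iff] using hV
  obtain ⟨e', he', hne', hab'⟩ := mem_graphOf_E.1 hab
  obtain ⟨e, he, h₁, h₂⟩ := htrack e' he'
  have hmem : e'.1 ∈ S.image φ ∧ e'.2 ∈ S.image φ := by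
    rcases Sym2.eq_iff.1 hab' with ⟨rfl, rfl⟩ | ⟨rfl, rfl⟩
    exacts [⟨ha, hb⟩, ⟨hb, ha⟩]
  obtain ⟨h₁S, h₁φ⟩ := h₁ hmem.1
  obtain ⟨h₂S, h₂φ⟩ := h₂ hmem.2
  refine hS _ h₁S _ h₂S (mem_graphOf_E.2 ⟨e, he, fun h => hne' ?_, rfl⟩)
  rw [h₁φ, h₂φ, h]

lemma card_filter_not_le_le_two {c : ℕ} {N : Finset ℕ} (hlarge : ∀ x ∈ N, c ≤ x + 2) :
    (N.filter (¬ c ≤ ·)).card ≤ 2 := by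
  have : N.filter (¬ c ≤ ·) ⊆ Finset.Icc (c - 2) (c - 1) := by
    intro x hx
    have := hlarge x (Finset.mem_filter.1 hx).1
    simp only [Finset.mem_filter, Finset.mem_Icc] at hx ⊢
    omega
  refine (Finset.card_le_card this).trans ?_
  simp only [Nat.card_Icc]
  omega

lemma exists_large_injOn_and_spare {c : ℕ} {N A : Finset ℕ} (hN : c + 1 ≤ N.card)
    (hlarge : ∀ x ∈ N, c ≤ x + 2) (hA : A.card + 1 ≤ c) :
    ∃ g : ℕ → ℕ, (∀ a, g a ∈ N) ∧ Set.InjOn g A ∧ (∀ a ∈ A, c ≤ g a ∧ ∀ b ∉ A, g b ≠ g a) ∧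
      ∀ b ∉ A, g b < c → c ≤ A.card + 1 := by
  classical
  set big := N.filter (c ≤ ·)
  have hsplit : big.card + (N.filter (¬ c ≤ ·)).card = N.card :=
    Finset.card_filter_add_card_filter_not _
  have hsmall := card_filter_not_le_le_two hlarge
  obtain ⟨g, hgmaps, hginj⟩ := A.finite_toSet.exists_injOn_of_encard_le (t := (big : Set ℕ))
    (by simpa using (by omega : A.card ≤ big.card))
  have hgA : ∀ a ∈ A, g a ∈ N ∧ c ≤ g a := fun a ha => by
    simpa [big] using hgmaps (Finset.mem_coe.2 ha)
  obtain ⟨e, heN, hne, he⟩ : ∃ e ∈ N, (∀ a ∈ A, g a ≠ e) ∧ (e < c → c ≤ A.card + 1) := by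
    by_cases hspare : ∃ e ∈ big, ∀ a ∈ A, g a ≠ e
    · obtain ⟨e, he, hne⟩ := hspare
      obtain ⟨heN, hce⟩ := Finset.mem_filter.1 he
      exact ⟨e, heN, hne, fun h => absurd hce (by omega)⟩
    · push Not at hspare
      have hcover : big.card ≤ A.card := (Finset.card_le_card fun x hx =>
        Finset.mem_image.2 (hspare x hx)).trans Finset.card_image_le
      obtain ⟨e, heN, he⟩ : ∃ e ∈ N, e ∉ A.image g := by
        by_contra! h
        have := (Finset.card_le_card h).trans (Finset.card_image_le (s := A) (f := g))
        omega
      exact ⟨e, heN, fun a ha h => he (Finset.mem_image.2 ⟨a, ha, h⟩), fun _ => by omega⟩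
  refine ⟨fun a => if a ∈ A then g a else e, fun a => ?_, fun a ha b hb h => ?_,
    fun a ha => ?_, fun b hb => by simpa [hb] using he⟩
  · dsimp only
    split_ifs with ha
    exacts [(hgA a ha).1, heN]
  · simp only [Finset.mem_coe] at ha hb
    simp only [ha, hb, if_true] at h
    exact hginj ha hb h
  · refine ⟨by simpa [ha] using (hgA a ha).2, fun b hb => ?_⟩
    simpa [ha, hb] using (hne a ha).symm

lemma exists_vertex_renaming {ι : Type*} {c : ℕ} {Keep : ι → Prop} {N A : ι → Finset ℕ}
    {g : ι → ℕ → ℕ} (hg : ∀ P, ¬ Keep P → ∀ a ∈ A P, g P a ∈ N P ∧ c ≤ g P a)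
    (hginj : ∀ P, ¬ Keep P → Set.InjOn (g P) (A P))
    (hdisj : ∀ P P', ¬ Keep P → ¬ Keep P' → P ≠ P' → Disjoint (N P) (N P'))
    {S : Finset ℕ} (hsmall : ∀ v ∈ S, (∀ P, ¬ Keep P → v ∉ A P) → v < c) :
    ∃ φ : ℕ → ℕ, Set.InjOn φ S ∧
      (∀ v ∈ S, φ v < c → φ v = v ∧ ∀ P, ¬ Keep P → v ∉ A P) ∧
      (∀ v ∈ S, c ≤ φ v → ∃ P, ¬ Keep P ∧ v ∈ A P ∧ φ v = g P v) ∧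
      (∀ v ∈ S, ∀ P, ¬ Keep P → φ v ∈ N P → c ≤ φ v → v ∈ A P ∧ φ v = g P v) := by
  classical
  let φ : ℕ → ℕ := fun v => if h : ∃ P, ¬ Keep P ∧ v ∈ A P then g h.choose v else v
  have hφ v (hv : v ∈ S) : ((∀ P, ¬ Keep P → v ∉ A P) ∧ φ v = v ∧ v < c) ∨
      ∃ P, ¬ Keep P ∧ v ∈ A P ∧ φ v = g P v ∧ g P v ∈ N P ∧ c ≤ g P v := by
    by_cases h : ∃ P, ¬ Keep P ∧ v ∈ A P
    · exact Or.inr ⟨_, h.choose_spec.1, h.choose_spec.2, dif_pos h,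
        hg _ h.choose_spec.1 v h.choose_spec.2⟩
    · push Not at h
      exact Or.inl ⟨h, dif_neg (by simpa using h), hsmall v hv h⟩
  have hsame {P P' x} (hP : ¬ Keep P) (hP' : ¬ Keep P') (hx : x ∈ N P) (hx' : x ∈ N P') :
      P = P' := by
    by_contra hne
    exact Finset.disjoint_left.1 (hdisj P P' hP hP' hne) hx hx'
  refine ⟨φ, fun u hu v hv huv => ?_, fun v hv hlt => ?_, fun v hv hle => ?_,
    fun v hv P hP hN hle => ?_⟩
  · rcases hφ u hu with ⟨-, hu₁, hu₂⟩ | ⟨P, hP, huA, hu₁, hu₂, hu₃⟩ <;>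
      rcases hφ v hv with ⟨-, hv₁, hv₂⟩ | ⟨P', hP', hvA, hv₁, hv₂, hv₃⟩
    · rwa [hu₁, hv₁] at huv
    · omega
    · omega
    · obtain rfl := hsame hP hP' hu₂ (by rwa [← hu₁, huv, hv₁])
      exact hginj P hP huA hvA (by rwa [← hu₁, ← hv₁])
  · rcases hφ v hv with ⟨h, hv₁, -⟩ | ⟨P, -, -, hv₁, -, hv₂⟩
    exacts [⟨hv₁, h⟩, by omega]
  · rcases hφ v hv with ⟨-, hv₁, hv₂⟩ | ⟨P, hP, hvA, hv₁, -⟩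
    exacts [by omega, ⟨P, hP, hvA, hv₁⟩]
  · rcases hφ v hv with ⟨-, hv₁, hv₂⟩ | ⟨P', hP', hvA, hv₁, hv₂, -⟩
    · omega
    · obtain rfl := hsame hP' hP (hv₁ ▸ hv₂) hN
      exact ⟨hvA, hv₁⟩

theorem exists_renaming {ι : Type*} {c : ℕ} {Keep : ι → Prop} {N : ι → Finset ℕ}
    (hcard : ∀ P, ¬ Keep P → c + 1 ≤ (N P).card) (hlarge : ∀ P, ¬ Keep P → ∀ x ∈ N P, c ≤ x + 2)
    (hdisj : ∀ P P', ¬ Keep P → ¬ Keep P' → P ≠ P' → Disjoint (N P) (N P'))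
    {slots : Set (ι × ℕ)} (hsmall : ∀ s ∈ slots, Keep s.1 → s.2 < c)
    {S : Finset ℕ} (hS : S.card < c) (hocc : ∀ v ∈ S, ∃ s ∈ slots, s.2 = v) :
    ∃ (ρ : ι × ℕ → ℕ) (φ : ℕ → ℕ), (∀ s, ¬ Keep s.1 → ρ s ∈ N s.1) ∧
      (∀ s, Keep s.1 → ρ s = s.2) ∧ Set.InjOn φ S ∧ (∀ v ∈ S, ∃ s ∈ slots, ρ s = φ v) ∧
      ∀ s ∈ slots, Tracks S φ s.2 (ρ s) := by
  classical
  let A : ι → Finset ℕ := fun P => S.filter fun v => (P, v) ∈ slots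
  have hAS P : A P ⊆ S := Finset.filter_subset ..
  choose! g hg using fun P hP => exists_large_injOn_and_spare (hcard P hP) (hlarge P hP)
    ((Finset.card_le_card (hAS P)).trans_lt hS)
  obtain ⟨φ, hφinj, hφsmall, hφlarge, howner⟩ := exists_vertex_renaming
    (fun P hP a ha => ⟨(hg P hP).1 a, ((hg P hP).2.2.1 a ha).1⟩) (fun P hP => (hg P hP).2.1)
    hdisj (S := S) fun v hv hv' => by
      obtain ⟨s, hs, rfl⟩ := hocc v hv
      exact hsmall s hs (by_contra fun hs' => hv' s.1 hs' (Finset.mem_filter.2 ⟨hv, hs⟩))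
  let ρ : ι × ℕ → ℕ := fun s => if Keep s.1 then s.2 else g s.1 s.2
  refine ⟨ρ, φ, fun s hs => by simpa [ρ, hs] using (hg s.1 hs).1 s.2, fun s hs => if_pos hs,
    hφinj, fun v hv => ?_, ?_⟩
  · by_cases hc : c ≤ φ v
    · obtain ⟨P, hP, hvA, hφv⟩ := hφlarge v hv hc
      exact ⟨(P, v), (Finset.mem_filter.1 hvA).2, by simp [ρ, hP, hφv]⟩
    · obtain ⟨hφv, hvA⟩ := hφsmall v hv (by omega)
      obtain ⟨s, hs, rfl⟩ := hocc v hv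
      have hs' : Keep s.1 := by_contra fun hs' => hvA s.1 hs' (Finset.mem_filter.2 ⟨hv, hs⟩)
      exact ⟨s, hs, by simp [ρ, hs', hφv]⟩
  · rintro ⟨P, a⟩ hs hmem
    obtain ⟨u, hu, hφu⟩ := Finset.mem_image.1 hmem
    show a ∈ S ∧ ρ (P, a) = φ a
    by_cases hP : Keep P
    · have hρ : ρ (P, a) = a := if_pos hP
      obtain ⟨hφu', -⟩ := hφsmall u hu (by rw [hφu, hρ]; exact hsmall _ hs hP)
      obtain rfl : u = a := by rw [← hφu', hφu, hρ]
      exact ⟨hu, hφu.symm⟩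
    have hρ : ρ (P, a) = g P a := if_neg hP
    by_cases hc : c ≤ g P a
    · obtain ⟨huA, hgu⟩ := howner u hu P hP (by rw [hφu, hρ]; exact (hg P hP).1 a)
        (by rwa [hφu, hρ])
      by_cases ha : a ∈ A P
      · obtain rfl : u = a := (hg P hP).2.1 huA ha (by rw [← hgu, hφu, hρ])
        exact ⟨hu, hφu.symm⟩
      · exact absurd (by rw [← hgu, hφu, hρ]) (((hg P hP).2.2.1 u huA).2 a ha)
    -- a small spare name forces `A P = S`, and then every vertex of `S` is renamed to a large name
    · have ha : a ∉ A P := fun ha => hc ((hg P hP).2.2.1 a ha).1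
      have hAS' : A P = S := Finset.eq_of_subset_of_card_le (hAS P)
        (by have := (hg P hP).2.2.2 a ha (by omega); omega)
      exact absurd (hAS' ▸ hu) ((hφsmall u hu (by omega)).2 P hP)

lemma HasIS.mono {G : FinGraph} {k k' : ℕ} (h : HasIS G k) (hk : k' ≤ k) : HasIS G k' :=
  let ⟨S, hSV, hkS, hS⟩ := h
  ⟨S, hSV, hk.trans hkS, hS⟩

theorem exists_relabel_hasIS {ι : Type*} {c : ℕ} {Keep : ι → Prop} {N : ι → Finset ℕ}
    (hcard : ∀ P, ¬ Keep P → c + 1 ≤ (N P).card) (hlarge : ∀ P, ¬ Keep P → ∀ x ∈ N P, c ≤ x + 2)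
    (hdisj : ∀ P P', ¬ Keep P → ¬ Keep P' → P ≠ P' → Disjoint (N P) (N P'))
    {L : List ((ι × ℕ) × (ι × ℕ))}
    (hsmall : ∀ x ∈ L, (Keep x.1.1 → x.1.2 < c) ∧ (Keep x.2.1 → x.2.2 < c))
    {k : ℕ} (hk : k < c) (hIS : HasIS (graphOf (L.map (Prod.map Prod.snd Prod.snd))) k) :
    ∃ ρ : ι × ℕ → ℕ, (∀ s, ¬ Keep s.1 → ρ s ∈ N s.1) ∧ (∀ s, Keep s.1 → ρ s = s.2) ∧
      HasIS (graphOf (L.map (Prod.map ρ ρ))) k := by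
  obtain ⟨S', hS'V, hkS', hS'⟩ := hIS
  obtain ⟨S, hSS', rfl⟩ := Finset.exists_subset_card_eq hkS'
  obtain ⟨ρ, φ, hρN, hρ, hφ, hocc, htrack⟩ := exists_renaming hcard hlarge hdisj
    (slots := {s | ∃ x ∈ L, s = x.1 ∨ s = x.2}) (S := S)
    (by rintro s ⟨x, hx, rfl | rfl⟩; exacts [(hsmall x hx).1, (hsmall x hx).2]) hk
    (fun v hv => by
      obtain ⟨e, he, hev⟩ := mem_graphOf_V.1 (hS'V (hSS' hv))
      obtain ⟨x, hx, rfl⟩ := List.mem_map.1 he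
      rcases hev with rfl | rfl
      exacts [⟨x.1, ⟨x, hx, Or.inl rfl⟩, rfl⟩, ⟨x.2, ⟨x, hx, Or.inr rfl⟩, rfl⟩])
  refine ⟨ρ, hρN, hρ, hasIS_of_tracks (fun a ha b hb => hS' a (hSS' ha) b (hSS' hb)) hφ
    (fun v hv => ?_) fun e' he' => ?_⟩
  · obtain ⟨s, ⟨x, hx, hs⟩, hsv⟩ := hocc v hv
    refine mem_graphOf_V.2 ⟨_, List.mem_map_of_mem hx, ?_⟩
    rcases hs with rfl | rfl
    exacts [Or.inl hsv, Or.inr hsv]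
  · obtain ⟨x, hx, rfl⟩ := List.mem_map.1 he'
    exact ⟨_, List.mem_map_of_mem hx, htrack _ ⟨x, hx, Or.inl rfl⟩,
      htrack _ ⟨x, hx, Or.inr rfl⟩⟩

lemma pickThreshold_subset {Q : Type} (T : Q → Q → Set Word) (k : ℕ) (p q : Q) :
    pickThreshold T k p q ⊆ T p q := by
  rintro w (⟨-, hw⟩ | ⟨-, hw, -⟩)
  exacts [hw, hw.1]

namespace IsPickSeparate

variable {Q : Type} {T ps : Q → Q → Set Word} {s t : ℕ} {p q : Q}

lemma subset (hps : IsPickSeparate T s t ps) (p q : Q) : ps p q ⊆ T p q := by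
  obtain ⟨ord, -, h⟩ := hps
  by_cases hfin : (T p q).Finite
  · exact ((h p q).1 hfin).le
  · exact fun w hw => (((h p q).2 hfin).1 w hw).1

lemma finite (hps : IsPickSeparate T s t ps) (hs : s ≠ 0) (p q : Q) : (ps p q).Finite := by
  obtain ⟨ord, -, h⟩ := hps
  by_cases hfin : (T p q).Finite
  · exact (h p q).1 hfin ▸ hfin
  · exact Set.finite_of_ncard_ne_zero (((h p q).2 hfin).2.1 ▸ hs)

lemma eq_of_finite (hps : IsPickSeparate T s t ps) (hfin : (T p q).Finite) : ps p q = T p q := by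
  obtain ⟨ord, -, h⟩ := hps
  exact (h p q).1 hfin

lemma ncard_eq (hps : IsPickSeparate T s t ps) (hinf : ¬ (T p q).Finite) : (ps p q).ncard = s := by
  obtain ⟨ord, -, h⟩ := hps
  exact ((h p q).2 hinf).2.1

lemma le_length (hps : IsPickSeparate T s t ps) (hinf : ¬ (T p q).Finite) {w : Word}
    (hw : w ∈ ps p q) : t ≤ w.length := by
  obtain ⟨ord, -, h⟩ := hps
  exact (((h p q).2 hinf).1 w hw).2.1

lemma dropLast_ne (hps : IsPickSeparate T s t ps) {P P' : Q × Q} (hP : ¬ (T P.1 P.2).Finite)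
    (hP' : ¬ (T P'.1 P'.2).Finite) (hne : P ≠ P') {w w' : Word} (hw : w ∈ ps P.1 P.2)
    (hw' : w' ∈ ps P'.1 P'.2) : w.dropLast ≠ w'.dropLast := by
  obtain ⟨ord, hord, h⟩ := hps
  rcases lt_or_gt_of_ne (hord.ne hne) with hlt | hlt
  · exact ((((h P'.1 P'.2).2 hP').1 w' hw').2.2 P.1 P.2 hlt w hw)
  · exact fun heq => (((h P.1 P.2).2 hP).1 w hw).2.2 P'.1 P'.2 hlt w' hw' heq.symm

end IsPickSeparate

section VertexTokens

variable {Q : Type} {M : NFA' Q} {p q : Q}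

lemma eq_tok_of_mem_VM (hEnc : M.lang ⊆ Enc) (hre : M.Reachable) (hco : M.CoReachable)
    {y : Letter} (hy : isMarker y) {a : ℕ} (ht : tok Letter.lett y a ∈ VM M p q) {u : Word}
    (hu : u ∈ VM M p q) : u = tok Letter.lett y (tokName u) := by
  obtain ⟨y', hy', n, rfl⟩ := mem_vertTokens_iff.1 hu.2
  obtain ⟨x, z, hctx⟩ := NFA'.exists_context hre hco p q
  rw [marker_eq_of_mem_enc hy hy' (hEnc (hctx _ ht.1)) (hEnc (hctx _ hu.1)), tokName_tok]

lemma VM_injOn_tokName (hEnc : M.lang ⊆ Enc) (hre : M.Reachable) (hco : M.CoReachable) :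
    Set.InjOn tokName (VM M p q) := by
  intro u hu v hv h
  obtain ⟨y, hy, n, rfl⟩ := mem_vertTokens_iff.1 hu.2
  rw [eq_tok_of_mem_VM hEnc hre hco hy hu hv, ← h, tokName_tok]

lemma dropLast_eq_of_tokName_eq {u v : Word} (hu : u ∈ VertTokens) (hv : v ∈ VertTokens)
    (h : tokName u = tokName v) : u.dropLast = v.dropLast := by
  obtain ⟨y, -, n, rfl⟩ := mem_vertTokens_iff.1 hu
  obtain ⟨y', -, n', rfl⟩ := mem_vertTokens_iff.1 hv
  simp only [tokName_tok] at h
  rw [tok_dropLast, tok_dropLast, h]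

lemma lt_card_of_VM_finite [Fintype Q] (hfin : (VM M p q).Finite) {y : Letter} (hy : isMarker y)
    {n : ℕ} (h : tok Letter.lett y n ∈ VM M p q) : n < Fintype.card Q := by
  refine lt_card_of_finite_tok ((hfin.image tokName).subset fun m hm => ?_) h.1
  exact ⟨_, ⟨hm, mem_vertTokens_iff.2 ⟨y, hy, m, rfl⟩⟩, tokName_tok ..⟩

lemma exists_tokNames [Fintype Q] (hEnc : M.lang ⊆ Enc) (hre : M.Reachable)
    (hco : M.CoReachable) {ps : Q → Q → Set Word}
    (hps : IsPickSeparate (VM M) (Fintype.card Q + 1) (Fintype.card Q) ps) :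
    ∃ N : Q × Q → Finset ℕ,
      (∀ P, ¬ (VM M P.1 P.2).Finite → Fintype.card Q + 1 ≤ (N P).card) ∧
      (∀ P, ¬ (VM M P.1 P.2).Finite → ∀ x ∈ N P, Fintype.card Q ≤ x + 2) ∧
      (∀ P P', ¬ (VM M P.1 P.2).Finite → ¬ (VM M P'.1 P'.2).Finite → P ≠ P' →
        Disjoint (N P) (N P')) ∧
      ∀ P, ∀ x ∈ N P, ∃ u ∈ ps P.1 P.2, tokName u = x := by
  have hfin := hps.finite (Nat.succ_ne_zero _)
  refine ⟨fun P => (hfin P.1 P.2).toFinset.image tokName, fun P hP => ?_, fun P hP x hx => ?_,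
    fun P P' hP hP' hne => ?_, fun P x hx => by simpa using hx⟩
  · rw [Finset.card_image_of_injOn, ← Set.ncard_eq_toFinset_card _ (hfin P.1 P.2), hps.ncard_eq hP]
    exact (VM_injOn_tokName hEnc hre hco).mono (by simpa using hps.subset P.1 P.2)
  · obtain ⟨u, hu, rfl⟩ : ∃ u ∈ ps P.1 P.2, tokName u = x := by simpa using hx
    have := hps.le_length hP hu
    simp only [tokName]
    omega
  · refine Finset.disjoint_left.2 fun x hx hx' => ?_
    obtain ⟨u, hu, rfl⟩ : ∃ u ∈ ps P.1 P.2, tokName u = x := by simpa using hx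
    obtain ⟨u', hu', hname⟩ : ∃ u' ∈ ps P'.1 P'.2, tokName u' = tokName u := by simpa using hx'
    exact hps.dropLast_ne hP hP' hne hu hu' (dropLast_eq_of_tokName_eq
      (hps.subset _ _ hu).2 (hps.subset _ _ hu').2 hname.symm)

end VertexTokens

lemma exists_slots_of_edgeWord_mem {Q : Type} {M : NFA' Q} {p q : Q} {es : List (ℕ × ℕ)}
    (h : edgeWord es ∈ (M.between p q).lang) :
    ∃ L : List (((Q × Q) × ℕ) × ((Q × Q) × ℕ)), L.map (Prod.map Prod.snd Prod.snd) = es ∧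
      (∀ x ∈ L, leftTok x.1.2 ∈ VM M x.1.1.1 x.1.1.2 ∧ rightTok x.2.2 ∈ VM M x.2.1.1 x.2.1.2) ∧
      ∀ (rep : Q → Q → Set Word) (ρ : (Q × Q) × ℕ → ℕ),
        (∀ x ∈ L, leftTok (ρ x.1) ∈ rep x.1.1.1 x.1.1.2 ∧ rightTok (ρ x.2) ∈ rep x.2.1.1 x.2.1.2) →
        RepPath rep p q (edgeWord (L.map (Prod.map ρ ρ))) := by
  induction es generalizing p with
  | nil =>
    refine ⟨[], rfl, by simp, fun rep ρ _ => ?_⟩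
    obtain rfl : q = p := NFA'.mem_between_lang_iff.1 h
    exact .nil q
  | cons e es ih =>
    rw [edgeWord_cons, NFA'.append_mem_between_iff] at h
    obtain ⟨r₁, hl, hr⟩ := h
    rw [NFA'.append_mem_between_iff] at hr
    obtain ⟨r₂, hr, hes⟩ := hr
    obtain ⟨L, hL, hLV, hpath⟩ := ih hes
    refine ⟨(((p, r₁), e.1), ((r₁, r₂), e.2)) :: L, by simp [hL], ?_, fun rep ρ hρ => ?_⟩
    · simp only [List.mem_cons, forall_eq_or_imp]
      exact ⟨⟨⟨hl, Or.inl ⟨_, rfl⟩⟩, hr, Or.inr ⟨_, rfl⟩⟩, hLV⟩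
    · simp only [List.mem_cons, forall_eq_or_imp] at hρ
      rw [List.map_cons, edgeWord_cons]
      exact .cons hρ.1.1 (.cons hρ.1.2 (hpath rep ρ hρ.2))

lemma tok_mem_of_exists_tokName_eq {Q : Type} {M : NFA' Q} (hEnc : M.lang ⊆ Enc)
    (hre : M.Reachable) (hco : M.CoReachable) {ps : Q → Q → Set Word} {p q : Q}
    (hps : ps p q ⊆ VM M p q) {y : Letter} (hy : isMarker y) {a b : ℕ}
    (ht : tok Letter.lett y a ∈ VM M p q) (hb : ∃ u ∈ ps p q, tokName u = b) :
    tok Letter.lett y b ∈ ps p q := by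
  obtain ⟨u, hu, rfl⟩ := hb
  rwa [← eq_tok_of_mem_VM hEnc hre hco hy ht (hps hu)]

lemma exists_mem_hatLang_hasIS {Q : Type} [Fintype Q] {M : NFA' Q} (hEnc : M.lang ⊆ Enc)
    (hre : M.Reachable) (hco : M.CoReachable) {ps : Q → Q → Set Word}
    (hps : IsPickSeparate (VM M) (Fintype.card Q + 1) (Fintype.card Q) ps)
    {rep : Q → Q → Set Word} (hrep : ∀ p q : Q, rep p q = pickThreshold (KM M) 0 p q ∪ ps p q)
    {k : ℕ} {es : List (ℕ × ℕ)} (hw : encode k es ∈ M.lang) (hIS : HasIS (graphOf es) k) :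
    ∃ k₀ es', encode k₀ es' ∈ hatLang M rep ∧ HasIS (graphOf es') k₀ := by
  obtain ⟨f, hf, hw⟩ := NFA'.mem_lang_iff.1 hw
  obtain ⟨c₁, hthr, hedges⟩ := NFA'.append_mem_between_iff.1 hw
  obtain ⟨L, rfl, hLV, hpath⟩ := exists_slots_of_edgeWord_mem hedges
  obtain ⟨k₀, hk₀k, hk₀, hthr₀⟩ := exists_tok_mem_pickThreshold ⟨hthr, k, rfl⟩
  obtain ⟨N, hcard, hlarge, hdisj, hN⟩ := exists_tokNames hEnc hre hco hps
  obtain ⟨ρ, hρN, hρ, hIS'⟩ := exists_relabel_hasIS hcard hlarge hdisj (L := L)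
    (fun x hx => ⟨fun h => lt_card_of_VM_finite h rfl (hLV x hx).1,
      fun h => lt_card_of_VM_finite h rfl (hLV x hx).2⟩) hk₀ (hIS.mono hk₀k)
  have hslot {s : (Q × Q) × ℕ} {y} (hy : isMarker y)
      (hs : tok Letter.lett y s.2 ∈ VM M s.1.1 s.1.2) :
      tok Letter.lett y (ρ s) ∈ rep s.1.1 s.1.2 := by
    rw [hrep]
    right
    by_cases hfin : (VM M s.1.1 s.1.2).Finite
    · rw [hρ s hfin, hps.eq_of_finite hfin]
      exact hs
    · exact tok_mem_of_exists_tokName_eq hEnc hre hco (hps.subset _ _) hy hs (hN _ _ (hρN s hfin))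
  refine ⟨k₀, L.map (Prod.map ρ ρ), mem_hatLang_iff.2 ⟨f, hf, ?_⟩, hIS'⟩
  refine .cons (hrep _ _ ▸ Or.inl hthr₀) (hpath rep ρ fun x hx => ⟨?_, ?_⟩)
  exacts [hslot rfl (hLV x hx).1, hslot rfl (hLV x hx).2]

/-- For `rep(p,q) = pick_threshold_K(0, p, q) ∪ pick_separate_V(|Q|+1, |Q|, p, q)`
(with the threshold-token sets `K_M` and the vertex-token sets `V_M`), `L(M)` contains an
encoded positive Independent Set instance iff the finite core `decode(L(M̂_rep))` contains a
positive Independent Set instance. -/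
theorem stmt12 {Q : Type} [Fintype Q] (M : NFA' Q)
    (hEnc : M.lang ⊆ Enc) (hre : M.Reachable) (hco : M.CoReachable)
    (ps : Q → Q → Set Word)
    (hps : IsPickSeparate (VM M) (Fintype.card Q + 1) (Fintype.card Q) ps)
    (rep : Q → Q → Set Word)
    (hrepdef : ∀ p q : Q, rep p q = pickThreshold (KM M) 0 p q ∪ ps p q) :
    (∃ w ∈ M.lang, ∃ (G : FinGraph) (k : ℕ), decodesTo w G k ∧ HasIS G k) ↔
      (∃ w ∈ hatLang M rep, ∃ (G : FinGraph) (k : ℕ), decodesTo w G k ∧ HasIS G k) := by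
  constructor
  · rintro ⟨w, hw, G, k, ⟨es, rfl, rfl⟩, hIS⟩
    obtain ⟨k₀, es', hw', hIS'⟩ := exists_mem_hatLang_hasIS hEnc hre hco hps hrepdef hw hIS
    exact ⟨_, hw', _, k₀, ⟨es', rfl, rfl⟩, hIS'⟩
  · rintro ⟨w, hw, G, k, hdec, hIS⟩
    refine ⟨w, hatLang_subset_lang (fun p q => ?_) hw, G, k, hdec, hIS⟩
    rw [hrepdef]
    exact Set.union_subset ((pickThreshold_subset _ _ p q).trans Set.inter_subset_left)
      ((hps.subset p q).trans Set.inter_subset_left)
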